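/- arXiv:2102.02236 — 6 statements merged into one kernel-verified Lean document; each statement's English description precedes it below -/
import Mathlib

section
/- Let n = v ⊕ z be a generalized Heisenberg algebra and ξ ∈ n a unit vector such that s = n ⊖ ℝξ (the orthogonal complement of ℝξ in n) is a Lie subalgebra of n. Then ξ ∈ v. -/
open RealInnerProductSpace

/-- If `ξ` is a unit vector in a generalized Heisenberg algebra `n = v ⊕ z`
(with `[v,v] = z`) such that the orthogonal complement `s = n ⊖ ℝξ` is a Lie
subalgebra, then `ξ ∈ v`. -/
theorem generalized_heisenberg_codim_one_subalgebra_normal_in_v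
    {V : Type*} [NormedAddCommGroup V] [InnerProductSpace ℝ V]
    (v z : Submodule ℝ V)
    (b J : V →ₗ[ℝ] V →ₗ[ℝ] V)
    (horth : ∀ U ∈ v, ∀ Z ∈ z, ⟪U, Z⟫ = 0)
    (hsum : v ⊔ z = ⊤)
    (hskew : ∀ X : V, b X X = 0)
    (hvv : ∀ U ∈ v, ∀ W ∈ v, b U W ∈ z)
    (hvvspan : Submodule.span ℝ {x : V | ∃ U ∈ v, ∃ W ∈ v, b U W = x} = z)
    (hcent : ∀ X : V, ∀ Z ∈ z, b X Z = 0)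
    (hJv : ∀ Z ∈ z, ∀ U ∈ v, J Z U ∈ v)
    (hJdef : ∀ Z ∈ z, ∀ U ∈ v, ∀ W ∈ v, ⟪J Z U, W⟫ = ⟪b U W, Z⟫)
    (hJ2 : ∀ Z ∈ z, ∀ U ∈ v, J Z (J Z U) = (-⟪Z, Z⟫) • U)
    (ξ : V) (hξ : ‖ξ‖ = 1)
    (hsub : ∀ X Y : V, ⟪X, ξ⟫ = 0 → ⟪Y, ξ⟫ = 0 → ⟪b X Y, ξ⟫ = 0) :
    ξ ∈ v := by
  obtain ⟨U, hU, Z, hZ, hUZ⟩ : ∃ U ∈ v, ∃ Z ∈ z, U + Z = ξ := by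
    rw [← Submodule.mem_sup, hsum]; exact Submodule.mem_top
  by_cases hZ0 : Z = 0
  · rw [← hUZ, hZ0, add_zero]; exact hU
  have hZZ : ⟪Z, Z⟫ ≠ 0 := fun h => hZ0 (inner_self_eq_zero.mp h)
  -- key claim: for X ∈ v orthogonal to U, ⟪b X U, Z⟫ = 0
  have claim : ∀ X ∈ v, ⟪X, U⟫ = 0 → ⟪b X U, Z⟫ = 0 := by
    intro X hX hXU
    have hXξ : ⟪X, ξ⟫ = 0 := by
      rw [← hUZ, inner_add_right, hXU, horth X hX Z hZ]; ring
    set Y := (⟪Z, Z⟫ : ℝ) • U - (⟪U, U⟫ : ℝ) • Z with hY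
    have hZU : ⟪Z, U⟫ = 0 := by rw [real_inner_comm]; exact horth U hU Z hZ
    have hYξ : ⟪Y, ξ⟫ = 0 := by
      rw [← hUZ, hY, inner_sub_left, inner_add_right, inner_add_right,
        inner_smul_left, inner_smul_left, inner_smul_left, inner_smul_left,
        horth U hU Z hZ, hZU]
      simp only [starRingEnd_apply, star_trivial]
      ring
    have h0 := hsub X Y hXξ hYξ
    have hbXY : b X Y = (⟪Z, Z⟫ : ℝ) • b X U := by
      rw [hY, map_sub, map_smul, map_smul, hcent X Z hZ, smul_zero, sub_zero]
    have hbUU : ⟪b X U, U⟫ = 0 := by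
      rw [real_inner_comm]; exact horth U hU (b X U) (hvv X hX U hU)
    rw [hbXY, ← hUZ, inner_smul_left, inner_add_right, hbUU] at h0
    simp only [starRingEnd_apply, star_trivial, zero_add] at h0
    rcases mul_eq_zero.mp h0 with h | h
    · exact absurd h hZZ
    · exact h
  -- step 1: U = 0
  have hU0 : U = 0 := by
    have h1 : J Z U ∈ v := hJv Z hZ U hU
    have h2 : ⟪J Z U, U⟫ = 0 := by
      rw [hJdef Z hZ U hU U hU, hskew, inner_zero_left]
    have h3 := claim (J Z U) h1 h2
    have h4 := hJdef Z hZ (J Z U) h1 U hU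
    rw [hJ2 Z hZ U hU, h3, inner_smul_left] at h4
    simp only [starRingEnd_apply, star_trivial, neg_mul, neg_eq_zero] at h4
    rcases mul_eq_zero.mp h4 with h | h
    · exact absurd h hZZ
    · exact inner_self_eq_zero.mp h
  have hξZ : ξ = Z := by rw [← hUZ, hU0, zero_add]
  -- step 2: v is trivial
  have hv0 : ∀ X ∈ v, X = 0 := by
    intro X hX
    have hXξ : ⟪X, ξ⟫ = 0 := by
      rw [hξZ]; exact horth X hX Z hZ
    have hJX : J Z X ∈ v := hJv Z hZ X hX
    have hJXξ : ⟪J Z X, ξ⟫ = 0 := by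
      rw [hξZ]; exact horth (J Z X) hJX Z hZ
    have h0 := hsub X (J Z X) hXξ hJXξ
    rw [hξZ, ← hJdef Z hZ X hX (J Z X) hJX] at h0
    have hJX0 : J Z X = 0 := inner_self_eq_zero.mp h0
    have h5 := hJ2 Z hZ X hX
    rw [hJX0, map_zero] at h5
    have := smul_eq_zero.mp h5.symm
    rcases this with h | h
    · exact absurd (neg_eq_zero.mp h) hZZ
    · exact h
  -- step 3: z is trivial, contradiction
  exfalso
  apply hZ0
  rw [← hvvspan] at hZ
  have hle : Submodule.span ℝ {x : V | ∃ U ∈ v, ∃ W ∈ v, b U W = x} ≤ ⊥ := by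
    rw [Submodule.span_le]
    rintro x ⟨U', hU', W', hW', rfl⟩
    simp only [SetLike.mem_coe, Submodule.mem_bot]
    rw [hv0 U' hU', map_zero, LinearMap.zero_apply]
  simpa using hle hZ
end

section
/- Let n = v ⊕ z be a generalized Heisenberg algebra, ξ ∈ v a unit vector, and s = (v ⊖ ℝξ) ⊕ z with the decomposition s = Jξ ⊕ (Jξ)^⊥ ⊕ z, where Jξ = {J_Z ξ : Z ∈ z} and (Jξ)^⊥ = v ⊖ (ℝξ ⊕ Jξ). Suppose [(Jξ)^⊥, Jξ] = 0. Then for any fixed nonzero Z ∈ z, J_Z maps Jξ ⊕ ℝξ into itself, i.e. Jξ ⊕ ℝξ is a J_Z-complex subspace of v. -/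
open RealInnerProductSpace

/-- In a generalized Heisenberg algebra `n = v ⊕ z` with unit `ξ ∈ v`,
if `[(Jξ)^⊥, Jξ] = 0` then `Jξ ⊕ ℝξ` is `J_Z`-invariant for every nonzero `Z ∈ z`. -/
theorem generalized_heisenberg_Jxi_complex_subspace
    {V : Type*} [NormedAddCommGroup V] [InnerProductSpace ℝ V]
    (v z : Submodule ℝ V)
    (b J : V →ₗ[ℝ] V →ₗ[ℝ] V)
    (horth : ∀ U ∈ v, ∀ Z ∈ z, ⟪U, Z⟫ = 0)
    (hsum : v ⊔ z = ⊤)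
    (hskew : ∀ X : V, b X X = 0)
    (hvv : ∀ U ∈ v, ∀ W ∈ v, b U W ∈ z)
    (hcent : ∀ X : V, ∀ Z ∈ z, b X Z = 0)
    (hJv : ∀ Z ∈ z, ∀ U ∈ v, J Z U ∈ v)
    (hJdef : ∀ Z ∈ z, ∀ U ∈ v, ∀ W ∈ v, ⟪J Z U, W⟫ = ⟪b U W, Z⟫)
    (hJ2 : ∀ Z ∈ z, ∀ U ∈ v, J Z (J Z U) = (-⟪Z, Z⟫) • U)
    (ξ : V) (hξv : ξ ∈ v) (hξ : ‖ξ‖ = 1)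
    (hcomm : ∀ U ∈ v ⊓ ((ℝ ∙ ξ) ⊔ Submodule.span ℝ {x : V | ∃ Z ∈ z, J Z ξ = x})ᗮ,
             ∀ W ∈ Submodule.span ℝ {x : V | ∃ Z ∈ z, J Z ξ = x}, b U W = 0) :
    ∀ Z ∈ z, Z ≠ 0 →
      ∀ W ∈ Submodule.span ℝ {x : V | ∃ Z' ∈ z, J Z' ξ = x} ⊔ (ℝ ∙ ξ),
        J Z W ∈ Submodule.span ℝ {x : V | ∃ Z' ∈ z, J Z' ξ = x} ⊔ (ℝ ∙ ξ) := by
  intro Z hZz hZne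
  set S : Set V := {x : V | ∃ Z' ∈ z, J Z' ξ = x} with hSdef
  set P : Submodule ℝ V := Submodule.span ℝ S ⊔ (ℝ ∙ ξ) with hPdef
  have hξξ : ⟪ξ, ξ⟫ = 1 := by
    rw [real_inner_self_eq_norm_sq, hξ]; norm_num
  -- b is skew-symmetric
  have hbskew : ∀ U W : V, b U W = - b W U := by
    intro U W
    have h : b W U + b U W = 0 := by
      have h := hskew (U + W)
      simpa [map_add, hskew U, hskew W] using h
    exact eq_neg_of_add_eq_zero_right h
  -- J Z₀ is skew-adjoint on v
  have hskewadj : ∀ Z₀ ∈ z, ∀ U ∈ v, ∀ X ∈ v, ⟪J Z₀ U, X⟫ = -⟪U, J Z₀ X⟫ := by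
    intro Z₀ h0 U hU X hX
    rw [hJdef Z₀ h0 U hU X hX, hbskew U X, inner_neg_left, ← hJdef Z₀ h0 X hX U hU,
      real_inner_comm]
  -- anticommutation relation
  have hanti : ∀ Z₁ ∈ z, ∀ Z₂ ∈ z, ∀ U ∈ v,
      J Z₁ (J Z₂ U) + J Z₂ (J Z₁ U) = (-(2 * ⟪Z₁, Z₂⟫)) • U := by
    intro Z₁ h1 Z₂ h2 U hU
    have h := hJ2 (Z₁ + Z₂) (z.add_mem h1 h2) U hU
    simp only [map_add, LinearMap.add_apply, hJ2 Z₁ h1 U hU, hJ2 Z₂ h2 U hU,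
      real_inner_add_add_self] at h
    have h' : J Z₁ (J Z₂ U) + J Z₂ (J Z₁ U)
        = (-(⟪Z₁,Z₁⟫ + 2*⟪Z₁,Z₂⟫ + ⟪Z₂,Z₂⟫)) • U - (-⟪Z₁,Z₁⟫) • U - (-⟪Z₂,Z₂⟫) • U := by
      rw [← h]; abel
    rw [h']; module
  -- ⟪J Z₁ ξ, J Z₂ ξ⟫ = ⟪Z₁, Z₂⟫
  have lemJJ : ∀ Z₁ ∈ z, ∀ Z₂ ∈ z, ⟪J Z₁ ξ, J Z₂ ξ⟫ = ⟪Z₁, Z₂⟫ := by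
    intro Z₁ h1 Z₂ h2
    have e1 : ⟪J Z₁ ξ, J Z₂ ξ⟫ = -⟪ξ, J Z₁ (J Z₂ ξ)⟫ :=
      hskewadj Z₁ h1 ξ hξv (J Z₂ ξ) (hJv Z₂ h2 ξ hξv)
    have e2 : ⟪J Z₂ ξ, J Z₁ ξ⟫ = -⟪ξ, J Z₂ (J Z₁ ξ)⟫ :=
      hskewadj Z₂ h2 ξ hξv (J Z₁ ξ) (hJv Z₁ h1 ξ hξv)
    have e3 := hanti Z₁ h1 Z₂ h2 ξ hξv
    have e4 : ⟪ξ, J Z₁ (J Z₂ ξ)⟫ + ⟪ξ, J Z₂ (J Z₁ ξ)⟫ = -(2*⟪Z₁,Z₂⟫) := by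
      rw [← inner_add_right, e3, real_inner_smul_right, hξξ]; ring
    have e5 := real_inner_comm (J Z₁ ξ) (J Z₂ ξ)
    linarith
  have hJξξ : ∀ Z₀ ∈ z, ⟪J Z₀ ξ, ξ⟫ = 0 := by
    intro Z₀ h0
    rw [hJdef Z₀ h0 ξ hξv ξ hξv, hskew ξ, inner_zero_left]
  -- key step on generators
  have key : ∀ Z' ∈ z, J Z (J Z' ξ) ∈ P := by
    intro Z' hZ'
    have hWv : J Z' ξ ∈ v := hJv Z' hZ' ξ hξv
    set X := J Z (J Z' ξ) with hX
    have hXv : X ∈ v := hJv Z hZz _ hWv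
    set Z'' := b ξ X with hZ''
    have hZ''z : Z'' ∈ z := hvv ξ hξv X hXv
    have hJZ''v : J Z'' ξ ∈ v := hJv Z'' hZ''z ξ hξv
    set a := ⟪X, ξ⟫ with ha
    set D := X - a • ξ - J Z'' ξ with hD
    have hDv : D ∈ v := v.sub_mem (v.sub_mem hXv (v.smul_mem a hξv)) hJZ''v
    have hDξ : ⟪D, ξ⟫ = 0 := by
      rw [hD, inner_sub_left, inner_sub_left, real_inner_smul_left, hξξ,
        hJξξ Z'' hZ''z, ← ha]
      ring
    have hDJ : ∀ Z₀ ∈ z, ⟪D, J Z₀ ξ⟫ = 0 := by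
      intro Z₀ h0
      have hXJ : ⟪X, J Z₀ ξ⟫ = ⟪Z'', Z₀⟫ := by
        rw [real_inner_comm, hJdef Z₀ h0 ξ hξv X hXv, ← hZ'']
      rw [hD, inner_sub_left, inner_sub_left, real_inner_smul_left,
        real_inner_comm (J Z₀ ξ) ξ, hJξξ Z₀ h0, hXJ, lemJJ Z'' hZ''z Z₀ h0]
      ring
    have hspanD : ∀ w ∈ Submodule.span ℝ S, ⟪w, D⟫ = 0 := by
      intro w hw
      induction hw using Submodule.span_induction with
      | mem x hx =>
        rcases hx with ⟨Z₀, h0, rfl⟩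
        rw [real_inner_comm]; exact hDJ Z₀ h0
      | zero => simp
      | add x y hx hy ihx ihy => rw [inner_add_left, ihx, ihy]; ring
      | smul r x hx ih => rw [real_inner_smul_left, ih]; ring
    have hDperp : D ∈ ((ℝ ∙ ξ) ⊔ Submodule.span ℝ S)ᗮ := by
      rw [Submodule.mem_orthogonal]
      intro u hu
      rcases Submodule.mem_sup.mp hu with ⟨y, hy, w, hw, rfl⟩
      rcases Submodule.mem_span_singleton.mp hy with ⟨r, rfl⟩
      rw [inner_add_left, real_inner_smul_left, real_inner_comm D ξ, hDξ, hspanD w hw]; ring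
    have hbD : b D (J Z' ξ) = 0 :=
      hcomm D (Submodule.mem_inf.mpr ⟨hDv, hDperp⟩) (J Z' ξ)
        (Submodule.subset_span ⟨Z', hZ', rfl⟩)
    have hXD : ⟪X, D⟫ = 0 := by
      rw [hX, hJdef Z hZz (J Z' ξ) hWv D hDv, hbskew (J Z' ξ) D, hbD]
      simp
    have hDD : ⟪D, D⟫ = 0 := by
      nth_rewrite 1 [hD]
      rw [inner_sub_left, inner_sub_left, real_inner_smul_left,
        real_inner_comm D ξ, hDξ, real_inner_comm D (J Z'' ξ), hDJ Z'' hZ''z, hXD]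
      ring
    have hD0 : D = 0 := by rwa [inner_self_eq_zero] at hDD
    have hXeq : X = J Z'' ξ + a • ξ := by
      have h0 : X - a • ξ - J Z'' ξ = 0 := by rw [← hD, hD0]
      have := sub_eq_zero.mp (by rw [← h0]; abel : X - (J Z'' ξ + a • ξ) = 0)
      exact this
    rw [hXeq] at *
    exact P.add_mem (Submodule.mem_sup_left (Submodule.subset_span ⟨Z'', hZ''z, rfl⟩))
      (Submodule.mem_sup_right (Submodule.mem_span_singleton.mpr ⟨a, rfl⟩))
  intro W hW
  have hle : P ≤ Submodule.comap (J Z) P := by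
    apply sup_le
    · rw [Submodule.span_le]
      rintro x ⟨Z', hZ', rfl⟩
      exact Submodule.mem_comap.mpr (key Z' hZ')
    · rw [Submodule.span_singleton_le_iff_mem]
      exact Submodule.mem_comap.mpr
        (Submodule.mem_sup_left (Submodule.subset_span ⟨Z, hZz, rfl⟩))
  exact hle hW
end

section
/- Let n = v ⊕ z be a generalized Heisenberg algebra with dim z ≥ 2, ξ ∈ v a unit vector, Jξ = {J_Z ξ : Z ∈ z}, and (Jξ)^⊥ = v ⊖ (ℝξ ⊕ Jξ). If [Jξ, (Jξ)^⊥] = 0, then Jξ is not an abelian subspace, i.e. there exist W, W' ∈ Jξ with [W, W'] ≠ 0. -/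
open RealInnerProductSpace

/-! Take orthogonal nonzero `Z, Z' ∈ z` and `W = J_Z J_{Z'} ξ ≠ 0`. Since `J_Z` and `J_{Z'}`
anticommute, `W ⊥ ξ`; if `Jξ` were abelian, `⟪W, J_{Z''} ξ⟫ = ⟪[J_{Z'} ξ, J_{Z''} ξ], Z⟫ = 0`,
so `W ∈ (Jξ)^⊥` and hence `[J_Z ξ, W] = 0`. But `⟪[J_Z ξ, W], Z'⟫ = ⟪J_{Z'} J_Z ξ, W⟫ = -|W|²`. -/

theorem Submodule.mem_orthogonal_span_iff {𝕜 E : Type*} [RCLike 𝕜] [NormedAddCommGroup E]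
    [InnerProductSpace 𝕜 E] {s : Set E} {w : E} :
    w ∈ (span 𝕜 s)ᗮ ↔ ∀ u ∈ s, inner 𝕜 u w = 0 := by
  rw [← span_singleton_le_iff_mem, ← IsOrtho, isOrtho_comm, isOrtho_span]
  simp

theorem exists_ne_zero_ne_zero_inner_eq_zero_of_two_le_finrank {𝕜 E : Type*} [RCLike 𝕜]
    [NormedAddCommGroup E] [InnerProductSpace 𝕜 E] (h : 2 ≤ Module.finrank 𝕜 E) :
    ∃ x y : E, x ≠ 0 ∧ y ≠ 0 ∧ inner 𝕜 x y = 0 := by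
  have : FiniteDimensional 𝕜 E := Module.finite_of_finrank_pos (by omega)
  let B := stdOrthonormalBasis 𝕜 E
  let i : Fin (Module.finrank 𝕜 E) := ⟨0, by omega⟩
  let j : Fin (Module.finrank 𝕜 E) := ⟨1, by omega⟩
  exact ⟨B i, B j, B.orthonormal.ne_zero i, B.orthonormal.ne_zero j,
    B.orthonormal.inner_eq_zero (by simp [i, j, Fin.ext_iff])⟩

namespace GeneralizedHeisenberg

variable {V : Type*} [NormedAddCommGroup V] [InnerProductSpace ℝ V]
  {v z : Submodule ℝ V} {b J : V →ₗ[ℝ] V →ₗ[ℝ] V} {Z Z' U W : V}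

theorem inner_J_left_eq_neg (hskew : b.IsAlt)
    (hJdef : ∀ Z ∈ z, ∀ U ∈ v, ∀ W ∈ v, ⟪J Z U, W⟫ = ⟪b U W, Z⟫)
    (hZ : Z ∈ z) (hU : U ∈ v) (hW : W ∈ v) :
    ⟪J Z U, W⟫ = -⟪U, J Z W⟫ := by
  rw [hJdef Z hZ U hU W hW, ← hskew.neg, inner_neg_left, ← hJdef Z hZ W hW U hU,
    real_inner_comm U]

theorem J_apply_ne_zero (hJ2 : ∀ Z ∈ z, ∀ U ∈ v, J Z (J Z U) = (-⟪Z, Z⟫) • U)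
    (hZ : Z ∈ z) (hZ0 : Z ≠ 0) (hU : U ∈ v) (hU0 : U ≠ 0) : J Z U ≠ 0 := by
  intro h
  have h₀ := hJ2 Z hZ U hU
  rw [h, map_zero, eq_comm, smul_eq_zero, neg_eq_zero, inner_self_eq_zero] at h₀
  exact h₀.elim hZ0 hU0

-- Polarizing `J_Z² = -|Z|²` at `Z + Z'` gives the Clifford relation.
theorem J_J_eq_neg_J_J (hJ2 : ∀ Z ∈ z, ∀ U ∈ v, J Z (J Z U) = (-⟪Z, Z⟫) • U)
    (hZ : Z ∈ z) (hZ' : Z' ∈ z) (hZZ' : ⟪Z, Z'⟫ = 0) (hU : U ∈ v) :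
    J Z (J Z' U) = -J Z' (J Z U) := by
  have h := hJ2 (Z + Z') (z.add_mem hZ hZ') U hU
  simp only [map_add, LinearMap.add_apply, hJ2 Z hZ U hU, hJ2 Z' hZ' U hU,
    real_inner_add_add_self, hZZ'] at h
  rw [eq_neg_iff_add_eq_zero]
  linear_combination (norm := module) h

theorem inner_J_J_self_eq_zero (hskew : b.IsAlt)
    (hJv : ∀ Z ∈ z, ∀ U ∈ v, J Z U ∈ v)
    (hJdef : ∀ Z ∈ z, ∀ U ∈ v, ∀ W ∈ v, ⟪J Z U, W⟫ = ⟪b U W, Z⟫)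
    (hJ2 : ∀ Z ∈ z, ∀ U ∈ v, J Z (J Z U) = (-⟪Z, Z⟫) • U)
    (hZ : Z ∈ z) (hZ' : Z' ∈ z) (hZZ' : ⟪Z, Z'⟫ = 0) (hU : U ∈ v) :
    ⟪J Z (J Z' U), U⟫ = 0 := by
  have h₁ := inner_J_left_eq_neg hskew hJdef hZ (hJv Z' hZ' U hU) hU
  have h₂ : ⟪J Z (J Z' U), U⟫ = ⟪J Z U, J Z' U⟫ := by
    rw [J_J_eq_neg_J_J hJ2 hZ hZ' hZZ' hU, inner_neg_left,
      inner_J_left_eq_neg hskew hJdef hZ' (hJv Z hZ U hU) hU, neg_neg, real_inner_comm]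
  linarith [real_inner_comm (J Z U) (J Z' U)]

theorem J_J_mem_inf_orthogonal (hskew : b.IsAlt)
    (hJv : ∀ Z ∈ z, ∀ U ∈ v, J Z U ∈ v)
    (hJdef : ∀ Z ∈ z, ∀ U ∈ v, ∀ W ∈ v, ⟪J Z U, W⟫ = ⟪b U W, Z⟫)
    (hJ2 : ∀ Z ∈ z, ∀ U ∈ v, J Z (J Z U) = (-⟪Z, Z⟫) • U)
    (hZ : Z ∈ z) (hZ' : Z' ∈ z) (hZZ' : ⟪Z, Z'⟫ = 0) {ξ : V} (hξv : ξ ∈ v)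
    (habel : ∀ W ∈ Submodule.span ℝ {x : V | ∃ Z ∈ z, J Z ξ = x},
      ∀ W' ∈ Submodule.span ℝ {x : V | ∃ Z ∈ z, J Z ξ = x}, b W W' = 0) :
    J Z (J Z' ξ) ∈ v ⊓ ((ℝ ∙ ξ) ⊔ Submodule.span ℝ {x : V | ∃ Z ∈ z, J Z ξ = x})ᗮ := by
  refine Submodule.mem_inf.mpr ⟨hJv Z hZ _ (hJv Z' hZ' ξ hξv), ?_⟩
  rw [← Submodule.span_insert, Submodule.mem_orthogonal_span_iff]
  rintro u (rfl | ⟨Z'', hZ'', rfl⟩) <;> rw [real_inner_comm]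
  · exact inner_J_J_self_eq_zero hskew hJv hJdef hJ2 hZ hZ' hZZ' hξv
  · rw [hJdef Z hZ _ (hJv Z' hZ' ξ hξv) _ (hJv Z'' hZ'' ξ hξv),
      habel _ (Submodule.subset_span ⟨Z', hZ', rfl⟩) _ (Submodule.subset_span ⟨Z'', hZ'', rfl⟩),
      inner_zero_left]

end GeneralizedHeisenberg

open GeneralizedHeisenberg in
theorem generalized_heisenberg_Jxi_not_abelian_general
    {V : Type*} [NormedAddCommGroup V] [InnerProductSpace ℝ V]
    (v z : Submodule ℝ V)
    (b J : V →ₗ[ℝ] V →ₗ[ℝ] V)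
    (hskew : ∀ X : V, b X X = 0)
    (hJv : ∀ Z ∈ z, ∀ U ∈ v, J Z U ∈ v)
    (hJdef : ∀ Z ∈ z, ∀ U ∈ v, ∀ W ∈ v, ⟪J Z U, W⟫ = ⟪b U W, Z⟫)
    (hJ2 : ∀ Z ∈ z, ∀ U ∈ v, J Z (J Z U) = (-⟪Z, Z⟫) • U)
    (hdim : 2 ≤ Module.finrank ℝ z)
    (ξ : V) (hξv : ξ ∈ v) (hξ : ‖ξ‖ = 1)
    (hcomm : ∀ W ∈ Submodule.span ℝ {x : V | ∃ Z ∈ z, J Z ξ = x},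
             ∀ U ∈ v ⊓ ((ℝ ∙ ξ) ⊔ Submodule.span ℝ {x : V | ∃ Z ∈ z, J Z ξ = x})ᗮ,
             b W U = 0) :
    ∃ W ∈ Submodule.span ℝ {x : V | ∃ Z ∈ z, J Z ξ = x},
      ∃ W' ∈ Submodule.span ℝ {x : V | ∃ Z ∈ z, J Z ξ = x}, b W W' ≠ 0 := by
  by_contra! habel
  obtain ⟨⟨Z, hZ⟩, ⟨Z', hZ'⟩, hZ0, hZ'0, hZZ'⟩ :=
    exists_ne_zero_ne_zero_inner_eq_zero_of_two_le_finrank hdim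
  have hξ0 : ξ ≠ 0 := norm_ne_zero_iff.mp (by simp [hξ])
  have hW0 : J Z (J Z' ξ) ≠ 0 := J_apply_ne_zero hJ2 hZ (by simpa using hZ0) (hJv Z' hZ' ξ hξv)
    (J_apply_ne_zero hJ2 hZ' (by simpa using hZ'0) hξv hξ0)
  have hbW : b (J Z ξ) (J Z (J Z' ξ)) = 0 := hcomm _ (Submodule.subset_span ⟨Z, hZ, rfl⟩) _
    (J_J_mem_inf_orthogonal hskew hJv hJdef hJ2 hZ hZ' hZZ' hξv habel)
  refine hW0 (inner_self_eq_zero (𝕜 := ℝ).mp ?_)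
  calc ⟪J Z (J Z' ξ), J Z (J Z' ξ)⟫ = -⟪J Z' (J Z ξ), J Z (J Z' ξ)⟫ := by
        rw [← inner_neg_left, ← J_J_eq_neg_J_J hJ2 hZ hZ' hZZ' hξv]
    _ = -⟪b (J Z ξ) (J Z (J Z' ξ)), Z'⟫ := by
        rw [hJdef Z' hZ' _ (hJv Z hZ ξ hξv) _ (hJv Z hZ _ (hJv Z' hZ' ξ hξv))]
    _ = 0 := by rw [hbW, inner_zero_left, neg_zero]

/-- In a generalized Heisenberg algebra `n = v ⊕ z` with `dim z ≥ 2` and unit `ξ ∈ v`,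
if `[Jξ, (Jξ)^⊥] = 0` then `Jξ` is not abelian. -/
theorem generalized_heisenberg_Jxi_not_abelian
    {V : Type*} [NormedAddCommGroup V] [InnerProductSpace ℝ V] [FiniteDimensional ℝ V]
    (v z : Submodule ℝ V)
    (b J : V →ₗ[ℝ] V →ₗ[ℝ] V)
    (horth : ∀ U ∈ v, ∀ Z ∈ z, ⟪U, Z⟫ = 0)
    (hsum : v ⊔ z = ⊤)
    (hskew : ∀ X : V, b X X = 0)
    (hvv : ∀ U ∈ v, ∀ W ∈ v, b U W ∈ z)
    (hcent : ∀ X : V, ∀ Z ∈ z, b X Z = 0)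
    (hJv : ∀ Z ∈ z, ∀ U ∈ v, J Z U ∈ v)
    (hJdef : ∀ Z ∈ z, ∀ U ∈ v, ∀ W ∈ v, ⟪J Z U, W⟫ = ⟪b U W, Z⟫)
    (hJ2 : ∀ Z ∈ z, ∀ U ∈ v, J Z (J Z U) = (-⟪Z, Z⟫) • U)
    (hdim : 2 ≤ Module.finrank ℝ z)
    (ξ : V) (hξv : ξ ∈ v) (hξ : ‖ξ‖ = 1)
    (hcomm : ∀ W ∈ Submodule.span ℝ {x : V | ∃ Z ∈ z, J Z ξ = x},
             ∀ U ∈ v ⊓ ((ℝ ∙ ξ) ⊔ Submodule.span ℝ {x : V | ∃ Z ∈ z, J Z ξ = x})ᗮ,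
             b W U = 0) :
    ∃ W ∈ Submodule.span ℝ {x : V | ∃ Z ∈ z, J Z ξ = x},
      ∃ W' ∈ Submodule.span ℝ {x : V | ∃ Z ∈ z, J Z ξ = x}, b W W' ≠ 0 :=
  generalized_heisenberg_Jxi_not_abelian_general v z b J hskew hJv hJdef hJ2 hdim ξ hξv hξ hcomm
end

section
/- Let s be a Lie algebra decomposed orthogonally as s = Jξ ⊕ (Jξ)^⊥ ⊕ z where z is central, [Jξ, Jξ] ⊆ z, [(Jξ)^⊥, (Jξ)^⊥] ⊆ z, [Jξ, (Jξ)^⊥] ⊆ z, and [s, z] = 0. Let Ric be the symmetric operator acting as -(m/2)·id on (Jξ)^⊥, ((1-m)/2)·id on Jξ, and ((n-2)/4)·id on z (for fixed reals m, n). Then there exists c ∈ ℝ such that Ric - c·id is a derivation of s if and only if at least two of the following three conditions hold: [Jξ, Jξ] = 0, [(Jξ)^⊥, (Jξ)^⊥] = 0, and [Jξ, (Jξ)^⊥] = 0. -/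
/-- Abstract form of Proposition 3.1: for `s = Jx ⊕ P ⊕ Zc` with `Zc` central,
all brackets lying in `Zc`, and `Ric` acting as `-(m/2)id` on `P`,
`((1-m)/2)id` on `Jx` and `((n-2)/4)id` on `Zc`, there is `c ∈ ℝ` with
`Ric - c·id` a derivation iff at least two of the three subspace-bracket
conditions vanish. -/
theorem ricci_soliton_two_of_three_criterion
    {V : Type*} [AddCommGroup V] [Module ℝ V]
    (b : V →ₗ[ℝ] V →ₗ[ℝ] V)
    (Jx P Zc : Submodule ℝ V)
    (hsum : Jx ⊔ P ⊔ Zc = ⊤)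
    (hskew : ∀ X : V, b X X = 0)
    (hJJ : ∀ U ∈ Jx, ∀ W ∈ Jx, b U W ∈ Zc)
    (hPP : ∀ U ∈ P, ∀ W ∈ P, b U W ∈ Zc)
    (hJP : ∀ U ∈ Jx, ∀ W ∈ P, b U W ∈ Zc)
    (hcent : ∀ X : V, ∀ Z ∈ Zc, b X Z = 0)
    (m n : ℝ)
    (Ric : V →ₗ[ℝ] V)
    (hRicP : ∀ X ∈ P, Ric X = (-(m / 2)) • X)
    (hRicJ : ∀ X ∈ Jx, Ric X = ((1 - m) / 2) • X)
    (hRicZ : ∀ Z ∈ Zc, Ric Z = ((n - 2) / 4) • Z) :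
    (∃ c : ℝ, ∀ X Y : V,
        Ric (b X Y) - c • b X Y
          = b (Ric X - c • X) Y + b X (Ric Y - c • Y)) ↔
      (((∀ U ∈ Jx, ∀ W ∈ Jx, b U W = 0) ∧ (∀ U ∈ P, ∀ W ∈ P, b U W = 0)) ∨
       ((∀ U ∈ Jx, ∀ W ∈ Jx, b U W = 0) ∧ (∀ U ∈ Jx, ∀ W ∈ P, b U W = 0)) ∨
       ((∀ U ∈ P, ∀ W ∈ P, b U W = 0) ∧ (∀ U ∈ Jx, ∀ W ∈ P, b U W = 0))) := by
  classical
  -- skew symmetry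
  have hskew2 : ∀ X Y : V, b Y X = - b X Y := by
    intro X Y
    have h := hskew (X + Y)
    simp only [map_add, LinearMap.add_apply, hskew, zero_add, add_zero] at h
    exact eq_neg_of_add_eq_zero_left h
  constructor
  · rintro ⟨c, hc⟩
    -- from a nonzero bracket of a given type, deduce the value of c
    have key : ∀ (a a' : ℝ) (U W : V), Ric U = a • U → Ric W = a' • W →
        b U W ∈ Zc → b U W ≠ 0 → (n - 2) / 4 - c = (a - c) + (a' - c) := by
      intro a a' U W hU hW hmem hne
      have h := hc U W
      rw [hRicZ _ hmem, hU, hW, ← sub_smul, ← sub_smul, ← sub_smul, map_smul,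
        LinearMap.smul_apply, map_smul, ← add_smul] at h
      exact smul_left_injective ℝ hne h
    by_cases hA : ∀ U ∈ Jx, ∀ W ∈ Jx, b U W = 0
    · by_cases hB : ∀ U ∈ P, ∀ W ∈ P, b U W = 0
      · exact Or.inl ⟨hA, hB⟩
      · by_cases hC : ∀ U ∈ Jx, ∀ W ∈ P, b U W = 0
        · exact Or.inr (Or.inl ⟨hA, hC⟩)
        · exfalso
          push_neg at hB hC
          obtain ⟨U, hU, W, hW, hne⟩ := hB
          obtain ⟨U', hU', W', hW', hne'⟩ := hC
          have e1 := key _ _ U W (hRicP U hU) (hRicP W hW) (hPP U hU W hW) hne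
          have e2 := key _ _ U' W' (hRicJ U' hU') (hRicP W' hW') (hJP U' hU' W' hW') hne'
          linarith
    · push_neg at hA
      obtain ⟨U, hU, W, hW, hne⟩ := hA
      have e1 := key _ _ U W (hRicJ U hU) (hRicJ W hW) (hJJ U hU W hW) hne
      by_cases hB : ∀ U ∈ P, ∀ W ∈ P, b U W = 0
      · by_cases hC : ∀ U ∈ Jx, ∀ W ∈ P, b U W = 0
        · exact Or.inr (Or.inr ⟨hB, hC⟩)
        · exfalso
          push_neg at hC
          obtain ⟨U', hU', W', hW', hne'⟩ := hC
          have e2 := key _ _ U' W' (hRicJ U' hU') (hRicP W' hW') (hJP U' hU' W' hW') hne'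
          linarith
      · exfalso
        push_neg at hB
        obtain ⟨U', hU', W', hW', hne'⟩ := hB
        have e2 := key _ _ U' W' (hRicP U' hU') (hRicP W' hW') (hPP U' hU' W' hW') hne'
        linarith
  · -- backward direction
    intro hcase
    -- generic machinery: for a fixed c, build the "defect" bilinear map and
    -- show it vanishes if it vanishes on generator pairs
    have main : ∀ (c : ℝ),
        (∀ U ∈ Jx, ∀ W ∈ Jx,
          Ric (b U W) - c • b U W = b (Ric U - c • U) W + b U (Ric W - c • W)) →
        (∀ U ∈ P, ∀ W ∈ P,
          Ric (b U W) - c • b U W = b (Ric U - c • U) W + b U (Ric W - c • W)) →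
        (∀ U ∈ Jx, ∀ W ∈ P,
          Ric (b U W) - c • b U W = b (Ric U - c • U) W + b U (Ric W - c • W)) →
        ∀ X Y : V,
          Ric (b X Y) - c • b X Y = b (Ric X - c • X) Y + b X (Ric Y - c • Y) := by
      intro c h1 h2 h3
      set D : V →ₗ[ℝ] V := Ric - c • LinearMap.id with hD
      have hDapp : ∀ X : V, D X = Ric X - c • X := by
        intro X; simp [hD]
      set E : V →ₗ[ℝ] V →ₗ[ℝ] V :=
        b.compr₂ D - b.comp D - b.compl₂ D with hE
      have hEapp : ∀ X Y : V,
          E X Y = (Ric (b X Y) - c • b X Y) - b (Ric X - c • X) Y - b X (Ric Y - c • Y) := by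
        intro X Y
        simp [hE, hDapp, LinearMap.sub_apply, LinearMap.compr₂_apply,
          LinearMap.comp_apply, LinearMap.compl₂_apply]
      -- E is antisymmetric
      have hEsymm : ∀ X Y : V, E Y X = - E X Y := by
        intro X Y
        rw [hEapp, hEapp, hskew2 X Y, hskew2 X (Ric Y - c • Y),
          hskew2 (Ric X - c • X) Y]
        simp only [map_neg, LinearMap.neg_apply, smul_neg]
        abel
      -- E vanishes when the second argument is central
      have hEZ : ∀ (X : V) (Z : V), Z ∈ Zc → E X Z = 0 := by
        intro X Z hZ
        have h1' : b X Z = 0 := hcent X Z hZ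
        have h2' : b (Ric X - c • X) Z = 0 := hcent _ Z hZ
        have h3' : b X (Ric Z - c • Z) = 0 := by
          rw [hRicZ Z hZ, ← sub_smul, map_smul, h1', smul_zero]
        rw [hEapp, h1', h2', h3']
        simp
      have hZE : ∀ (Z : V) (X : V), Z ∈ Zc → E Z X = 0 := by
        intro Z X hZ
        rw [hEsymm, hEZ X Z hZ, neg_zero]
      -- convert the hypotheses to E-statements
      have e1 : ∀ U ∈ Jx, ∀ W ∈ Jx, E U W = 0 := by
        intro U hU W hW; rw [hEapp, h1 U hU W hW]; abel
      have e2 : ∀ U ∈ P, ∀ W ∈ P, E U W = 0 := by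
        intro U hU W hW; rw [hEapp, h2 U hU W hW]; abel
      have e3 : ∀ U ∈ Jx, ∀ W ∈ P, E U W = 0 := by
        intro U hU W hW; rw [hEapp, h3 U hU W hW]; abel
      have e3' : ∀ U ∈ P, ∀ W ∈ Jx, E U W = 0 := by
        intro U hU W hW; rw [hEsymm, e3 W hW U hU, neg_zero]
      -- show E X = 0 for X in each generating submodule
      have hXzero : ∀ X : V, (∀ Y ∈ Jx, E X Y = 0) → (∀ Y ∈ P, E X Y = 0) →
          (∀ Y ∈ Zc, E X Y = 0) → E X = 0 := by
        intro X g1 g2 g3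
        have htop : ⊤ ≤ LinearMap.ker (E X) := by
          rw [← hsum]
          refine sup_le (sup_le ?_ ?_) ?_ <;> intro Y hY <;>
            rw [LinearMap.mem_ker]
          · exact g1 Y hY
          · exact g2 Y hY
          · exact g3 Y hY
        ext Y
        exact htop (Submodule.mem_top)
      have hEzero : E = 0 := by
        have htop : ⊤ ≤ LinearMap.ker E := by
          rw [← hsum]
          refine sup_le (sup_le ?_ ?_) ?_ <;> intro X hX <;>
            rw [LinearMap.mem_ker]
          · exact hXzero X (fun Y hY => e1 X hX Y hY) (fun Y hY => e3 X hX Y hY)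
              (fun Y hY => hEZ X Y hY)
          · exact hXzero X (fun Y hY => e3' X hX Y hY) (fun Y hY => e2 X hX Y hY)
              (fun Y hY => hEZ X Y hY)
          · ext Y; exact hZE X Y hX
        ext X Y
        have : E X = 0 := htop Submodule.mem_top
        rw [this]; rfl
      intro X Y
      have h0 : E X Y = 0 := by rw [hEzero]; rfl
      rw [hEapp] at h0
      rw [sub_sub] at h0
      exact sub_eq_zero.mp h0
    -- helper: the derivation identity for a pair whose bracket vanishes
    have predZero : ∀ (c a a' : ℝ) (U W : V), b U W = 0 → Ric U = a • U →
        Ric W = a' • W →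
        Ric (b U W) - c • b U W = b (Ric U - c • U) W + b U (Ric W - c • W) := by
      intro c a a' U W hb hU hW
      rw [hU, hW, ← sub_smul, ← sub_smul, map_smul, LinearMap.smul_apply,
        map_smul, hb]
      simp
    -- helper: the derivation identity for a pair whose bracket lies in Zc,
    -- given the scalar balance equation
    have predScal : ∀ (c a a' : ℝ) (U W : V), b U W ∈ Zc → Ric U = a • U →
        Ric W = a' • W → (n - 2) / 4 - c = (a - c) + (a' - c) →
        Ric (b U W) - c • b U W = b (Ric U - c • U) W + b U (Ric W - c • W) := by
      intro c a a' U W hmem hU hW hbal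
      rw [hRicZ _ hmem, hU, hW, ← sub_smul, ← sub_smul, ← sub_smul, map_smul,
        LinearMap.smul_apply, map_smul, ← add_smul, hbal]
    rcases hcase with ⟨hA, hB⟩ | ⟨hA, hC⟩ | ⟨hB, hC⟩
    · refine ⟨(4 - 4*m - n)/4, main _ ?_ ?_ ?_⟩
      · intro U hU W hW
        exact predZero _ ((1-m)/2) ((1-m)/2) U W (hA U hU W hW) (hRicJ U hU) (hRicJ W hW)
      · intro U hU W hW
        exact predZero _ (-(m/2)) (-(m/2)) U W (hB U hU W hW) (hRicP U hU) (hRicP W hW)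
      · intro U hU W hW
        exact predScal _ ((1-m)/2) (-(m/2)) U W (hJP U hU W hW) (hRicJ U hU)
          (hRicP W hW) (by ring)
    · refine ⟨(2 - 4*m - n)/4, main _ ?_ ?_ ?_⟩
      · intro U hU W hW
        exact predZero _ ((1-m)/2) ((1-m)/2) U W (hA U hU W hW) (hRicJ U hU) (hRicJ W hW)
      · intro U hU W hW
        exact predScal _ (-(m/2)) (-(m/2)) U W (hPP U hU W hW) (hRicP U hU)
          (hRicP W hW) (by ring)
      · intro U hU W hW
        exact predZero _ ((1-m)/2) (-(m/2)) U W (hC U hU W hW) (hRicJ U hU) (hRicP W hW)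
    · refine ⟨(6 - 4*m - n)/4, main _ ?_ ?_ ?_⟩
      · intro U hU W hW
        exact predScal _ ((1-m)/2) ((1-m)/2) U W (hJJ U hU W hW) (hRicJ U hU)
          (hRicJ W hW) (by ring)
      · intro U hU W hW
        exact predZero _ (-(m/2)) (-(m/2)) U W (hB U hU W hW) (hRicP U hU) (hRicP W hW)
      · intro U hU W hW
        exact predZero _ ((1-m)/2) (-(m/2)) U W (hC U hU W hW) (hRicJ U hU) (hRicP W hW)
end

section
/- In the Damek-Ricci algebra a ⊕ v ⊕ z with [B,U] = U/2 for U ∈ v, [B,Z] = Z for Z ∈ z (B the unit vector spanning a), and Lie brackets on v ⊕ z as in the generalized Heisenberg algebra: if ξ = aB + U + Z is a unit vector (a ∈ ℝ, U ∈ v, Z ∈ z) such that the orthogonal complement s = (a ⊕ v ⊕ z) ⊖ ℝξ is a Lie subalgebra, then Z = 0. -/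
open RealInnerProductSpace

/-- In the Damek–Ricci algebra `a ⊕ v ⊕ z`, if `ξ = aB + U + Z` is a unit
vector whose orthogonal complement is a Lie subalgebra, then `Z = 0`. -/
theorem damek_ricci_codim_one_subalgebra_no_center_component
    {V : Type*} [NormedAddCommGroup V] [InnerProductSpace ℝ V]
    (aS v z : Submodule ℝ V)
    (B0 : V) (hB0 : B0 ∈ aS) (hB0unit : ‖B0‖ = 1) (haS : aS = ℝ ∙ B0)
    (b J : V →ₗ[ℝ] V →ₗ[ℝ] V)
    (horthvz : ∀ U ∈ v, ∀ Z ∈ z, ⟪U, Z⟫ = 0)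
    (hortha : ∀ X ∈ aS, ∀ Y ∈ v ⊔ z, ⟪X, Y⟫ = 0)
    (hsum : aS ⊔ v ⊔ z = ⊤)
    (hskew : ∀ X : V, b X X = 0)
    (hvv : ∀ U ∈ v, ∀ W ∈ v, b U W ∈ z)
    (hvvspan : Submodule.span ℝ {x : V | ∃ U ∈ v, ∃ W ∈ v, b U W = x} = z)
    (hcent : ∀ X ∈ v ⊔ z, ∀ Z ∈ z, b X Z = 0)
    (hBv : ∀ U ∈ v, b B0 U = (1 / 2 : ℝ) • U)
    (hBz : ∀ Z ∈ z, b B0 Z = Z)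
    (hJv : ∀ Z ∈ z, ∀ U ∈ v, J Z U ∈ v)
    (hJdef : ∀ Z ∈ z, ∀ U ∈ v, ∀ W ∈ v, ⟪J Z U, W⟫ = ⟪b U W, Z⟫)
    (hJ2 : ∀ Z ∈ z, ∀ U ∈ v, J Z (J Z U) = (-⟪Z, Z⟫) • U)
    (aR : ℝ) (U0 Z0 ξ : V) (hU0 : U0 ∈ v) (hZ0 : Z0 ∈ z)
    (hξdef : ξ = aR • B0 + U0 + Z0) (hξunit : ‖ξ‖ = 1)
    (hsub : ∀ X Y : V, ⟪X, ξ⟫ = 0 → ⟪Y, ξ⟫ = 0 → ⟪b X Y, ξ⟫ = 0) :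
    Z0 = 0 := by
  have hzU : ∀ E ∈ z, ⟪E, U0⟫ = 0 := fun E hE => by
    rw [real_inner_comm]; exact horthvz U0 hU0 E hE
  have hzB : ∀ E ∈ z, ⟪E, B0⟫ = 0 := fun E hE => by
    rw [real_inner_comm]; exact hortha B0 hB0 E (Submodule.mem_sup_right hE)
  have hvB : ∀ W ∈ v, ⟪W, B0⟫ = 0 := fun W hW => by
    rw [real_inner_comm]; exact hortha B0 hB0 W (Submodule.mem_sup_left hW)
  have hzξ : ∀ E ∈ z, ⟪E, ξ⟫ = ⟪E, Z0⟫ := fun E hE => by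
    rw [hξdef, inner_add_right, inner_add_right, real_inner_smul_right,
      hzB E hE, hzU E hE]; ring
  have hvξ : ∀ W ∈ v, ⟪W, ξ⟫ = ⟪W, U0⟫ := fun W hW => by
    rw [hξdef, inner_add_right, inner_add_right, real_inner_smul_right,
      hvB W hW, horthvz W hW Z0 hZ0]; ring
  have key0 : U0 = 0 → Z0 = 0 := by
    intro hU0z
    have hspan : ∀ x ∈ z, ⟪Z0, x⟫ = 0 := by
      intro x hx
      rw [← hvvspan] at hx
      induction hx using Submodule.span_induction with
      | mem x hxm =>
        obtain ⟨W, hW, W', hW', rfl⟩ := hxm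
        have h1 : ⟪W, ξ⟫ = 0 := by rw [hvξ W hW, hU0z, inner_zero_right]
        have h2 : ⟪W', ξ⟫ = 0 := by rw [hvξ W' hW', hU0z, inner_zero_right]
        have h3 := hsub W W' h1 h2
        rw [hzξ _ (hvv W hW W' hW')] at h3
        rw [real_inner_comm]; exact h3
      | zero => simp
      | add x y _ _ hx hy => rw [inner_add_right, hx, hy]; ring
      | smul r x _ hx => rw [real_inner_smul_right, hx]; ring
    exact inner_self_eq_zero.mp (hspan Z0 hZ0)
  have hXv : J Z0 U0 ∈ v := hJv Z0 hZ0 U0 hU0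
  have hXξ : ⟪J Z0 U0, ξ⟫ = 0 := by
    rw [hvξ _ hXv, hJdef Z0 hZ0 U0 hU0 U0 hU0, hskew, inner_zero_left]
  have hYξ : ⟪⟪Z0, Z0⟫ • U0 - ⟪U0, U0⟫ • Z0, ξ⟫ = 0 := by
    rw [inner_sub_left, real_inner_smul_left, real_inner_smul_left,
      hvξ U0 hU0, hzξ Z0 hZ0]; ring
  have hmain := hsub _ _ hXξ hYξ
  have hbXZ : b (J Z0 U0) Z0 = 0 :=
    hcent _ (Submodule.mem_sup_left hXv) Z0 hZ0
  have hexp : b (J Z0 U0) (⟪Z0, Z0⟫ • U0 - ⟪U0, U0⟫ • Z0)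
      = ⟪Z0, Z0⟫ • b (J Z0 U0) U0 := by
    rw [map_sub, map_smul, map_smul, hbXZ, smul_zero, sub_zero]
  rw [hexp] at hmain
  have hbz : b (J Z0 U0) U0 ∈ z := hvv _ hXv U0 hU0
  have hbval : ⟪b (J Z0 U0) U0, Z0⟫ = -(⟪Z0, Z0⟫ * ⟪U0, U0⟫) := by
    rw [← hJdef Z0 hZ0 _ hXv U0 hU0, hJ2 Z0 hZ0 U0 hU0, real_inner_smul_left]
    ring
  rw [real_inner_smul_left, hzξ _ hbz, hbval] at hmain
  have hmain' : ⟪Z0, Z0⟫ * (⟪Z0, Z0⟫ * ⟪U0, U0⟫) = 0 := by linarith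
  rcases mul_eq_zero.mp hmain' with h | h'
  · exact inner_self_eq_zero.mp h
  rcases mul_eq_zero.mp h' with h | h
  · exact inner_self_eq_zero.mp h
  · exact key0 (inner_self_eq_zero.mp h)
end

section
/- Let AN be a Damek-Ricci space with Lie algebra a ⊕ v ⊕ z, ξ ∈ v a unit vector, Jξ = {J_Z ξ : Z ∈ z}, (Jξ)^⊥ = v ⊖ (ℝξ ⊕ Jξ), and s = a ⊕ (v ⊖ ℝξ) ⊕ z. Suppose the endomorphism D of s with D|_{a⊕(Jξ)^⊥} = 0, D|_{Jξ} = (1/2)id, D|_z = -(1/4)id is a derivation of s. Then Jξ and (Jξ)^⊥ are abelian subspaces of v and [(Jξ)^⊥, Jξ] = 0. -/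
open RealInnerProductSpace

/-- In a Damek–Ricci algebra `a ⊕ v ⊕ z` with unit `ξ ∈ v`, if the
endomorphism `D` with `D|_{a⊕(Jξ)^⊥} = 0`, `D|_{Jξ} = ½ id`, `D|_z = -¼ id`
is a derivation of `s = a ⊕ (v ⊖ ℝξ) ⊕ z`, then `Jξ` and `(Jξ)^⊥` are abelian
and `[(Jξ)^⊥, Jξ] = 0`. -/
theorem damek_ricci_derivation_forces_abelian
    {V : Type*} [NormedAddCommGroup V] [InnerProductSpace ℝ V]
    (aS v z : Submodule ℝ V)
    (B0 : V) (hB0 : B0 ∈ aS) (hB0unit : ‖B0‖ = 1) (haS : aS = ℝ ∙ B0)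
    (b J : V →ₗ[ℝ] V →ₗ[ℝ] V)
    (horthvz : ∀ U ∈ v, ∀ Z ∈ z, ⟪U, Z⟫ = 0)
    (hortha : ∀ X ∈ aS, ∀ Y ∈ v ⊔ z, ⟪X, Y⟫ = 0)
    (hsum : aS ⊔ v ⊔ z = ⊤)
    (hskew : ∀ X : V, b X X = 0)
    (hvv : ∀ U ∈ v, ∀ W ∈ v, b U W ∈ z)
    (hvvspan : Submodule.span ℝ {x : V | ∃ U ∈ v, ∃ W ∈ v, b U W = x} = z)
    (hcent : ∀ X ∈ v ⊔ z, ∀ Z ∈ z, b X Z = 0)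
    (hBv : ∀ U ∈ v, b B0 U = (1 / 2 : ℝ) • U)
    (hBz : ∀ Z ∈ z, b B0 Z = Z)
    (hJv : ∀ Z ∈ z, ∀ U ∈ v, J Z U ∈ v)
    (hJdef : ∀ Z ∈ z, ∀ U ∈ v, ∀ W ∈ v, ⟪J Z U, W⟫ = ⟪b U W, Z⟫)
    (hJ2 : ∀ Z ∈ z, ∀ U ∈ v, J Z (J Z U) = (-⟪Z, Z⟫) • U)
    (ξ : V) (hξv : ξ ∈ v) (hξunit : ‖ξ‖ = 1)
    (D : V →ₗ[ℝ] V) :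
    let Jxi : Submodule ℝ V := Submodule.span ℝ {x : V | ∃ Z ∈ z, J Z ξ = x}
    let Jperp : Submodule ℝ V := v ⊓ ((ℝ ∙ ξ) ⊔ Jxi)ᗮ
    let s : Submodule ℝ V := aS ⊔ ((v ⊓ (ℝ ∙ ξ)ᗮ) ⊔ z)
    (∀ X ∈ aS ⊔ Jperp, D X = 0) →
    (∀ X ∈ Jxi, D X = (1 / 2 : ℝ) • X) →
    (∀ Z ∈ z, D Z = (-(1 / 4) : ℝ) • Z) →
    (∀ X ∈ s, ∀ Y ∈ s, D (b X Y) = b (D X) Y + b X (D Y)) →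
      ((∀ U ∈ Jxi, ∀ W ∈ Jxi, b U W = 0) ∧
       (∀ U ∈ Jperp, ∀ W ∈ Jperp, b U W = 0) ∧
       (∀ U ∈ Jperp, ∀ W ∈ Jxi, b U W = 0)) := by
  intro Jxi Jperp s hD0 hDJ hDz hder
  have hJxi_le : Jxi ≤ v ⊓ (ℝ ∙ ξ)ᗮ := by
    rw [Submodule.span_le]
    rintro x ⟨Z, hZ, rfl⟩
    refine ⟨hJv Z hZ ξ hξv, ?_⟩
    rw [SetLike.mem_coe, Submodule.mem_orthogonal_singleton_iff_inner_right, real_inner_comm,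
      hJdef Z hZ ξ hξv ξ hξv, hskew]
    simp
  have hJperp_le : Jperp ≤ v ⊓ (ℝ ∙ ξ)ᗮ :=
    inf_le_inf le_rfl (Submodule.orthogonal_le le_sup_left)
  have hle_s : v ⊓ (ℝ ∙ ξ)ᗮ ≤ s := le_sup_left.trans le_sup_right
  have key : ∀ U ∈ v ⊓ (ℝ ∙ ξ)ᗮ, ∀ W ∈ v ⊓ (ℝ ∙ ξ)ᗮ, ∀ c1 c2 : ℝ,
      D U = c1 • U → D W = c2 • W → c1 + c2 ≠ -(1/4) → b U W = 0 := by
    intro U hU W hW c1 c2 hU' hW' hne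
    have hz : b U W ∈ z := hvv U hU.1 W hW.1
    have h1 := hder U (hle_s hU) W (hle_s hW)
    rw [hU', hW', hDz _ hz, LinearMap.map_smul₂, map_smul] at h1
    have h2 : ((-(1/4) : ℝ) - (c1 + c2)) • b U W = 0 := by
      rw [sub_smul, add_smul, h1]; abel
    rcases smul_eq_zero.mp h2 with h | h
    · exact absurd (by linarith [sub_eq_zero.mp h]) hne
    · exact h
  refine ⟨fun U hU W hW => key U (hJxi_le hU) W (hJxi_le hW) _ _ (hDJ U hU) (hDJ W hW)
      (by norm_num),
    fun U hU W hW => key U (hJperp_le hU) W (hJperp_le hW) 0 0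
      (by rw [hD0 U (Submodule.mem_sup_right hU), zero_smul]) (by rw [hD0 W (Submodule.mem_sup_right hW), zero_smul])
      (by norm_num),
    fun U hU W hW => key U (hJperp_le hU) W (hJxi_le hW) 0 _
      (by rw [hD0 U (Submodule.mem_sup_right hU), zero_smul]) (hDJ W hW) (by norm_num)⟩
end
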